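/- arXiv:1901.09740 — 4 statements merged into one kernel-verified Lean document; each statement's English description precedes it below -/
import Mathlib

section
/- Andreief's identity: for integrable functions f_1,…,f_n and g_1,…,g_n on a measure space (X, μ), (1/n!) ∫_{X^n} det[f_a(x_b)]_{a,b=1}^n · det[g_a(x_b)]_{a,b=1}^n dμ(x_1)⋯dμ(x_n) = det[∫_X f_a(x) g_b(x) dμ(x)]_{a,b=1}^n. -/
/-!
Expanding both determinants, the integrand becomes a signed sum over pairs of permutations
`(σ, τ)` of `∏ b, f (σ b) (x b) * g (τ b) (x b)`, which by Fubini integrates to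
`∏ b, A (σ b) (τ b)` with `A = [∫ f_a g_b dμ]`. For fixed `σ`, the substitution `τ = ρ * σ`
turns the sum over `τ` into the Leibniz expansion of `det A`, so the total is `n! * det A`.
-/

open MeasureTheory Equiv Finset

namespace Matrix

variable {ι R : Type*} [Fintype ι] [DecidableEq ι] [CommRing R]

local notation "ε " σ:arg => ((Perm.sign σ : ℤ) : R)

theorem det_mul_det_eq_sum_sum (M N : Matrix ι ι R) :
    M.det * N.det = ∑ σ : Perm ι, ∑ τ : Perm ι, ε σ * ε τ * ∏ b, M (σ b) b * N (τ b) b := by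
  rw [det_apply', det_apply', sum_mul_sum]
  refine sum_congr rfl fun σ _ => sum_congr rfl fun τ _ => ?_
  rw [prod_mul_distrib]
  ring

theorem sum_sign_mul_sign_mul_prod_eq_det (A : Matrix ι ι R) (σ : Perm ι) :
    ∑ τ : Perm ι, ε σ * ε τ * ∏ b, A (σ b) (τ b) = A.det := by
  rw [← det_transpose, det_apply', ← Equiv.sum_comp (Equiv.mulRight σ)]
  refine sum_congr rfl fun ρ _ => ?_
  have hsq : ε σ * ε σ = 1 := by
    rw [← Int.cast_mul, ← Units.val_mul, Int.units_mul_self, Units.val_one, Int.cast_one]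
  have hsign : ε σ * ε (ρ * σ) = ε ρ := by
    rw [Perm.sign_mul, Units.val_mul, Int.cast_mul]
    linear_combination ε ρ * hsq
  have hprod : ∏ b, A (σ b) ((ρ * σ) b) = ∏ c, Aᵀ (ρ c) c :=
    Equiv.prod_comp σ fun c => A c (ρ c)
  rw [coe_mulRight, hsign, hprod]

theorem sum_sum_sign_mul_sign_mul_prod (A : Matrix ι ι R) :
    ∑ σ : Perm ι, ∑ τ : Perm ι, ε σ * ε τ * ∏ b, A (σ b) (τ b) =
      (Fintype.card ι).factorial * A.det := by
  simp [sum_sign_mul_sign_mul_prod_eq_det, Fintype.card_perm]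

end Matrix

open Matrix

theorem integral_det_mul_det_pi {ι X 𝕜 : Type*} [Fintype ι] [DecidableEq ι] [MeasurableSpace X]
    [RCLike 𝕜] (μ : Measure X) [SigmaFinite μ] (f g : ι → X → 𝕜)
    (hint : ∀ a b, Integrable (fun x => f a x * g b x) μ) :
    ∫ x : ι → X, (of fun a b => f a (x b)).det * (of fun a b => g a (x b)).det
        ∂Measure.pi (fun _ => μ) =
      (Fintype.card ι).factorial * (of fun a b => ∫ x, f a x * g b x ∂μ).det := by
  have hterm (σ τ : Perm ι) : Integrable (fun x : ι → X =>
      ((Perm.sign σ : ℤ) : 𝕜) * (Perm.sign τ : ℤ) * ∏ b, f (σ b) (x b) * g (τ b) (x b))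
      (Measure.pi fun _ => μ) :=
    (Integrable.fintype_prod fun b => hint (σ b) (τ b)).const_mul _
  simp_rw [det_mul_det_eq_sum_sum, of_apply]
  rw [← sum_sum_sign_mul_sign_mul_prod,
    integral_finsetSum _ fun σ _ => integrable_finsetSum _ fun τ _ => hterm σ τ]
  refine sum_congr rfl fun σ _ => ?_
  rw [integral_finsetSum _ fun τ _ => hterm σ τ]
  refine sum_congr rfl fun τ _ => ?_
  rw [integral_const_mul, integral_fintype_prod_eq_prod fun b x => f (σ b) x * g (τ b) x]
  rfl

theorem andreief_identity_general {X : Type*} [MeasurableSpace X] (μ : Measure X)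
    [SigmaFinite μ] (n : ℕ) (f g : Fin n → X → ℂ)
    (hint : ∀ a b, Integrable (fun x => f a x * g b x) μ) :
    (1 / (n.factorial : ℂ)) *
        ∫ x : Fin n → X,
          (Matrix.det (Matrix.of fun a b => f a (x b))) *
            (Matrix.det (Matrix.of fun a b => g a (x b)))
          ∂(Measure.pi fun _ => μ) =
      Matrix.det (Matrix.of fun a b => ∫ x, f a x * g b x ∂μ) := by
  have hfact : (n.factorial : ℂ) ≠ 0 := Nat.cast_ne_zero.mpr n.factorial_ne_zero
  rw [integral_det_mul_det_pi μ f g hint, Fintype.card_fin, one_div, inv_mul_cancel_left₀ hfact]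

/-- Andreief's identity: for functions `f_1,…,f_n` and `g_1,…,g_n` on a
(σ-finite) measure space `(X, μ)` with all products `f_a g_b` integrable,
`(1/n!) ∫_{X^n} det[f_a(x_b)] det[g_a(x_b)] dμ^n = det[∫ f_a g_b dμ]`. -/
theorem andreief_identity {X : Type*} [MeasurableSpace X] (μ : Measure X)
    [SigmaFinite μ] (n : ℕ) (f g : Fin n → X → ℂ)
    (hf : ∀ a, Measurable (f a)) (hg : ∀ a, Measurable (g a))
    (hint : ∀ a b, Integrable (fun x => f a x * g b x) μ) :
    (1 / (n.factorial : ℂ)) *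
        ∫ x : Fin n → X,
          (Matrix.det (Matrix.of fun a b => f a (x b))) *
            (Matrix.det (Matrix.of fun a b => g a (x b)))
          ∂(Measure.pi fun _ => μ) =
      Matrix.det (Matrix.of fun a b => ∫ x, f a x * g b x ∂μ) :=
  andreief_identity_general μ n f g hint
end

section
/- Pólya-ensemble polynomial identity: let ω : (0,∞) → ℝ with finite Mellin transform Mω(j+1) ≠ 0 for j = 0,…,n. Define p_l(λ) = ∑_{j=0}^{l} (−1)^{l−j} l! Mω(l+1)/(j! (l−j)! Mω(j+1)) λ^j and q_l(λ) = (1/(l! Mω(l+1))) d^l/dλ^l [(−λ)^l ω(λ)]. Assume ω is smooth and all boundary terms vanish (λ^k ω^{(m)}(λ) → 0 as λ → 0⁺ and λ → ∞ for relevant k, m). Then ∫_0^∞ p_a(λ) q_b(λ) dλ = δ_{ab} for all 0 ≤ a, b ≤ n. -/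
open MeasureTheory Finset Filter

private lemma coeff_rec (b m i : ℕ) :
    m.choose (i+1) * (b.descFactorial (m-i-1) * (b - (m-i-1))) + m.choose i * b.descFactorial (m-i)
      = (m+1).choose (i+1) * b.descFactorial (m-i) := by
  have key : m.choose (i+1) * (b.descFactorial (m-i-1) * (b - (m-i-1)))
      = m.choose (i+1) * b.descFactorial (m-i) := by
    rcases Nat.eq_zero_or_pos (m - i) with h | h
    · have hlt : m < i + 1 := by omega
      simp [Nat.choose_eq_zero_of_lt hlt]
    · set k := m - i - 1 with hk
      have h1 : m - i = k + 1 := by omega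
      rw [h1, Nat.descFactorial_succ]
      ring
  rw [key, Nat.choose_succ_succ]
  ring

private lemma hasDerivAt_iteratedDeriv {f : ℝ → ℝ} (hf : ContDiff ℝ (⊤ : ℕ∞) f) (i : ℕ) (t : ℝ) :
    HasDerivAt (iteratedDeriv i f) (iteratedDeriv (i + 1) f t) t := by
  have h : DifferentiableAt ℝ (iteratedDeriv i f) t :=
    (hf.differentiable_iteratedDeriv i (by exact_mod_cast (ENat.coe_lt_top i))).differentiableAt
  simpa [iteratedDeriv_succ] using h.hasDerivAt

private lemma leibniz (ω : ℝ → ℝ) (hω : ContDiff ℝ (⊤ : ℕ∞) ω) (b m : ℕ) (t : ℝ) :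
    iteratedDeriv m (fun s : ℝ => (-s) ^ b * ω s) t
      = (-1 : ℝ) ^ b * ∑ i ∈ Finset.range (m + 1),
          ((m.choose i * b.descFactorial (m - i) : ℕ) : ℝ)
            * (t ^ (b - (m - i)) * iteratedDeriv i ω t) := by
  induction m generalizing t with
  | zero =>
    rw [show iteratedDeriv 0 (fun s : ℝ => (-s) ^ b * ω s) t = (-t) ^ b * ω t from by
          rw [iteratedDeriv_zero],
        Finset.sum_range_one]
    simp only [Nat.sub_self, Nat.sub_zero, Nat.choose_self, Nat.descFactorial_zero, mul_one,
      Nat.cast_one, one_mul, iteratedDeriv_zero]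
    rw [neg_pow]
    ring
  | succ m ih =>
    have hfun : iteratedDeriv m (fun s : ℝ => (-s) ^ b * ω s)
        = fun t : ℝ => (-1 : ℝ) ^ b * ∑ i ∈ Finset.range (m + 1),
            ((m.choose i * b.descFactorial (m - i) : ℕ) : ℝ)
              * (t ^ (b - (m - i)) * iteratedDeriv i ω t) := funext ih
    rw [iteratedDeriv_succ, hfun]
    have hD : HasDerivAt (fun t : ℝ => (-1 : ℝ) ^ b * ∑ i ∈ Finset.range (m + 1),
          ((m.choose i * b.descFactorial (m - i) : ℕ) : ℝ)
            * (t ^ (b - (m - i)) * iteratedDeriv i ω t))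
        ((-1 : ℝ) ^ b * ∑ i ∈ Finset.range (m + 1),
          ((m.choose i * b.descFactorial (m - i) : ℕ) : ℝ)
            * (((b - (m - i) : ℕ) : ℝ) * t ^ (b - (m - i) - 1) * iteratedDeriv i ω t
               + t ^ (b - (m - i)) * iteratedDeriv (i + 1) ω t)) t := by
      refine HasDerivAt.const_mul _ (HasDerivAt.fun_sum fun i _ => HasDerivAt.const_mul _ ?_)
      exact (hasDerivAt_pow _ t).mul (hasDerivAt_iteratedDeriv hω i t)
    rw [hD.deriv]
    congr 1
    -- abbreviations
    set D : ℕ → ℝ := fun i => iteratedDeriv i ω t with hDdef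
    have key : ∀ i ∈ Finset.range (m + 1),
        ((m.choose i * b.descFactorial (m - i) : ℕ) : ℝ)
          * (((b - (m - i) : ℕ) : ℝ) * t ^ (b - (m - i) - 1) * D i
             + t ^ (b - (m - i)) * D (i + 1))
        = (((m.choose i * (b.descFactorial (m - i) * (b - (m - i))) : ℕ) : ℝ)
             * (t ^ (b - (m - i) - 1) * D i))
          + (((m.choose i * b.descFactorial (m - i) : ℕ) : ℝ)
             * (t ^ (b - (m - i)) * D (i + 1))) := by
      intro i _
      push_cast
      ring
    rw [Finset.sum_congr rfl key, Finset.sum_add_distrib]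
    -- name the three families
    set P : ℕ → ℝ := fun i => ((m.choose i * (b.descFactorial (m - i) * (b - (m - i))) : ℕ) : ℝ)
        * (t ^ (b - (m - i) - 1) * D i) with hP
    set Q : ℕ → ℝ := fun i => ((m.choose i * b.descFactorial (m - i) : ℕ) : ℝ)
        * (t ^ (b - (m - i)) * D (i + 1)) with hQ
    set T : ℕ → ℝ := fun i => (((m+1).choose i * b.descFactorial (m + 1 - i) : ℕ) : ℝ)
        * (t ^ (b - (m + 1 - i)) * D i) with hT
    have hTP0 : T 0 = P 0 := by
      simp only [hT, hP]
      have h1 : b.descFactorial (m + 1) = (b - m) * b.descFactorial m := Nat.descFactorial_succ b m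
      have h2 : b - (m + 1) = b - m - 1 := by omega
      have h3 : m + 1 - 0 = m + 1 := rfl
      have h4 : m - 0 = m := rfl
      rw [h3, h4, h1, h2, Nat.choose_zero_right, Nat.choose_zero_right]
      push_cast
      ring
    have hstep : ∀ i ∈ Finset.range (m + 1), T (i + 1) = P (i + 1) + Q i := by
      intro i hi
      simp only [Finset.mem_range] at hi
      simp only [hT, hP, hQ]
      have h3 : m + 1 - (i + 1) = m - i := by omega
      have h4 : m - (i + 1) = m - i - 1 := by omega
      rw [h3, h4, ← coeff_rec b m i]
      rcases Nat.lt_or_ge i m with hlt | hge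
      · have h5 : b - (m - i - 1) - 1 = b - (m - i) := by omega
        rw [h5]
        push_cast
        ring
      · have him : i = m := by omega
        subst him
        simp [Nat.sub_self, Nat.choose_succ_self]
    calc (∑ i ∈ Finset.range (m + 1), P i) + ∑ i ∈ Finset.range (m + 1), Q i
        = ((∑ i ∈ Finset.range (m + 1), P (i + 1)) + P 0) + ∑ i ∈ Finset.range (m + 1), Q i := by
          have e1 : ∑ i ∈ Finset.range (m + 2), P i
              = (∑ i ∈ Finset.range (m + 1), P (i + 1)) + P 0 := Finset.sum_range_succ' P (m + 1)
          have e2 : ∑ i ∈ Finset.range (m + 2), P i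
              = (∑ i ∈ Finset.range (m + 1), P i) + P (m + 1) := Finset.sum_range_succ P (m + 1)
          have e3 : P (m + 1) = 0 := by
            simp [hP, Nat.choose_succ_self]
          rw [← e1, e2, e3, add_zero]
      _ = (∑ i ∈ Finset.range (m + 1), (P (i + 1) + Q i)) + T 0 := by
          rw [Finset.sum_add_distrib, hTP0]; ring
      _ = (∑ i ∈ Finset.range (m + 1), T (i + 1)) + T 0 := by
          rw [Finset.sum_congr rfl fun i hi => (hstep i hi).symm]
      _ = ∑ i ∈ Finset.range (m + 2), T i := (Finset.sum_range_succ' T (m + 1)).symm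

private lemma not_integrableOn_inv_Ioi {A : ℝ} (hA : 0 < A) :
    ¬ IntegrableOn (fun x : ℝ => x⁻¹) (Set.Ioi A) := by
  intro h
  have h2 : IntegrableOn (fun x : ℝ => x ^ (-1 : ℝ)) (Set.Ioi A) := by
    refine h.congr_fun (fun x hx => ?_) measurableSet_Ioi
    rw [Real.rpow_neg_one]
  rw [integrableOn_Ioi_rpow_iff hA] at h2
  linarith

private lemma tendsto_zero_atTop_aux (F F' G : ℝ → ℝ)
    (hd : ∀ x ∈ Set.Ioi (1:ℝ), HasDerivAt F (F' x) x)
    (hF' : IntegrableOn F' (Set.Ioi 1))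
    (hG : IntegrableOn G (Set.Ioi 1))
    (hFG : ∀ x ∈ Set.Ioi (1:ℝ), F x = x * G x) :
    Tendsto F atTop (nhds 0) := by
  have hlim : Tendsto F atTop (nhds (limUnder atTop F)) :=
    tendsto_limUnder_of_hasDerivAt_of_integrableOn_Ioi hd hF'
  set L := limUnder atTop F with hL
  rcases eq_or_ne L 0 with h0 | h0
  · rwa [h0] at hlim
  exfalso
  have hLpos : 0 < |L| / 2 := by positivity
  have hev : ∀ᶠ x in atTop, |L| / 2 ≤ |F x| := by
    filter_upwards [Metric.tendsto_nhds.mp hlim (|L| / 2) hLpos] with x hx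
    rw [Real.dist_eq] at hx
    have := abs_sub_abs_le_abs_sub (L) (F x)
    rw [abs_sub_comm] at this
    linarith
  rcases eventually_atTop.mp hev with ⟨M, hM⟩
  set A := max M 2 with hA
  have hA1 : (1:ℝ) < A := lt_of_lt_of_le one_lt_two (le_max_right _ _)
  have hA0 : (0:ℝ) < A := lt_trans one_pos hA1
  have hGA : IntegrableOn (fun x => |G x|) (Set.Ioi A) :=
    (hG.mono_set (Set.Ioi_subset_Ioi hA1.le)).abs
  have hbound : IntegrableOn (fun x : ℝ => |L| / 2 * x⁻¹) (Set.Ioi A) := by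
    refine Integrable.mono' hGA ?_ ?_
    · exact (aestronglyMeasurable_const.mul (measurable_inv.aestronglyMeasurable))
    · rw [ae_restrict_iff' measurableSet_Ioi]
      filter_upwards with x hx
      have hx1 : (1:ℝ) < x := lt_trans hA1 hx
      have hx0 : (0:ℝ) < x := lt_trans one_pos hx1
      have hxM : M ≤ x := le_trans (le_max_left M 2) hx.le
      have h1 : |L| / 2 ≤ |F x| := hM x hxM
      rw [hFG x hx1] at h1
      rw [abs_mul, abs_of_pos hx0] at h1
      have h2 : |L| / 2 * x⁻¹ ≤ |G x| := by
        rw [← div_eq_mul_inv, div_div, div_le_iff₀ (by positivity : (0:ℝ) < 2 * x)]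
        nlinarith [abs_nonneg (G x)]
      rw [Real.norm_eq_abs, abs_of_nonneg (by positivity)]
      exact h2
  have hinv : IntegrableOn (fun x : ℝ => x⁻¹) (Set.Ioi A) := by
    have h2 : IntegrableOn (fun x : ℝ => 2 / |L| * (|L| / 2 * x⁻¹)) (Set.Ioi A) :=
      hbound.const_mul (2 / |L|)
    refine IntegrableOn.congr_fun h2 (fun x _ => ?_) measurableSet_Ioi
    field_simp
  exact not_integrableOn_inv_Ioi hA0 hinv

private lemma ftc_Ioi (F F' : ℝ → ℝ) (l0 lt : ℝ)
    (hd : ∀ x ∈ Set.Ioi (0:ℝ), HasDerivAt F (F' x) x)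
    (hF' : IntegrableOn F' (Set.Ioi 0))
    (h0 : Tendsto F (nhdsWithin 0 (Set.Ioi 0)) (nhds l0))
    (ht : Tendsto F atTop (nhds lt)) :
    ∫ x in Set.Ioi (0:ℝ), F' x = lt - l0 := by
  set ε : ℕ → ℝ := fun k => 1 / (k + 1) with hεdef
  have hεpos : ∀ k, 0 < ε k := fun k => by positivity
  have hε0 : Tendsto ε atTop (nhds 0) := tendsto_one_div_add_atTop_nhds_zero_nat
  have key : ∀ k, ∫ x in Set.Ioi (ε k), F' x = lt - F (ε k) := by
    intro k
    refine integral_Ioi_of_hasDerivAt_of_tendsto ?_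
      (fun x hx => hd x (lt_trans (hεpos k) hx))
      (hF'.mono_set (Set.Ioi_subset_Ioi (hεpos k).le)) ht
    exact ((hd _ (hεpos k)).continuousAt).continuousWithinAt
  have hcover : AECover (volume.restrict (Set.Ioi (0:ℝ))) atTop (fun k => Set.Ioi (ε k)) := by
    constructor
    · filter_upwards [ae_restrict_mem measurableSet_Ioi] with x hx
      filter_upwards [hε0.eventually (gt_mem_nhds hx)] with k hk
      exact hk
    · exact fun k => measurableSet_Ioi
  have hInt := hcover.integral_tendsto_of_countably_generated hF'
  have hInt2 : Tendsto (fun k => ∫ x in Set.Ioi (ε k), F' x) atTop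
      (nhds (∫ x in Set.Ioi (0:ℝ), F' x)) := by
    refine hInt.congr fun k => ?_
    rw [Measure.restrict_restrict measurableSet_Ioi,
      Set.inter_eq_self_of_subset_left (Set.Ioi_subset_Ioi (hεpos k).le)]
  have hF0 : Tendsto (fun k => lt - F (ε k)) atTop (nhds (lt - l0)) := by
    refine Tendsto.const_sub lt (h0.comp ?_)
    rw [tendsto_nhdsWithin_iff]
    exact ⟨hε0, Eventually.of_forall fun k => hεpos k⟩
  refine tendsto_nhds_unique hInt2 ?_
  rwa [show (fun k => ∫ x in Set.Ioi (ε k), F' x) = fun k => lt - F (ε k) from funext key]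

/-- Pólya-ensemble biorthogonality: with `ω` smooth, Mellin transform values
`Mω(j+1) = ∫_0^∞ x^j ω(x) dx` finite and nonzero, vanishing boundary terms,
the polynomials
`p_l(λ) = ∑_{j=0}^l (−1)^{l−j} l! Mω(l+1)/(j!(l−j)! Mω(j+1)) λ^j`
and the weights `q_l(λ) = (1/(l! Mω(l+1))) ∂_λ^l[(−λ)^l ω(λ)]`
satisfy `∫_0^∞ p_a q_b = δ_{ab}` for all `0 ≤ a,b ≤ n`. -/
theorem polya_biorthogonality (n : ℕ) (ω : ℝ → ℝ) (hω : ContDiff ℝ (⊤ : ℕ∞) ω)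
    (Mw : ℕ → ℝ) (hMw : ∀ j ≤ n, Mw (j + 1) ≠ 0)
    (hMwint : ∀ j ≤ n, IntegrableOn (fun x => x ^ j * ω x) (Set.Ioi 0))
    (hMwval : ∀ j ≤ n, (∫ x in Set.Ioi (0 : ℝ), x ^ j * ω x) = Mw (j + 1))
    (hbd0 : ∀ k m : ℕ, k ≤ n → m ≤ n →
      Tendsto (fun l : ℝ => l ^ k * iteratedDeriv m ω l)
        (nhdsWithin 0 (Set.Ioi 0)) (nhds 0))
    (hbdtop : ∀ k m : ℕ, k ≤ n → m ≤ n →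
      Tendsto (fun l : ℝ => l ^ k * iteratedDeriv m ω l) atTop (nhds 0))
    (p : ℕ → ℝ → ℝ)
    (hp : ∀ l lam, p l lam = ∑ j ∈ Finset.range (l + 1),
      (-1 : ℝ) ^ (l - j) * l.factorial * Mw (l + 1) /
        (j.factorial * (l - j).factorial * Mw (j + 1)) * lam ^ j)
    (q : ℕ → ℝ → ℝ)
    (hq : ∀ l lam, q l lam =
      (1 / (l.factorial * Mw (l + 1))) *
        iteratedDeriv l (fun t => (-t) ^ l * ω t) lam)
    (hint : ∀ a b, a ≤ n → b ≤ n →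
      IntegrableOn (fun lam => p a lam * q b lam) (Set.Ioi 0)) :
    ∀ a b, a ≤ n → b ≤ n →
      (∫ lam in Set.Ioi (0 : ℝ), p a lam * q b lam) =
        if a = b then 1 else 0 := by
  have hfac : ∀ l : ℕ, (l.factorial : ℝ) ≠ 0 := fun l => by
    exact_mod_cast l.factorial_ne_zero
  have hgsm : ∀ b : ℕ, ContDiff ℝ (⊤ : ℕ∞) (fun s : ℝ => (-s) ^ b * ω s) :=
    fun b => ((contDiff_id.neg).pow b).mul hω
  have hder : ∀ (b m : ℕ) (t : ℝ),
      HasDerivAt (iteratedDeriv m (fun s : ℝ => (-s) ^ b * ω s))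
        (iteratedDeriv (m + 1) (fun s : ℝ => (-s) ^ b * ω s) t) t :=
    fun b m t => hasDerivAt_iteratedDeriv (hgsm b) m t
  -- relation between q and the iterated derivative
  have hqb : ∀ b, b ≤ n → ∀ t : ℝ,
      iteratedDeriv b (fun s : ℝ => (-s) ^ b * ω s) t
        = (b.factorial * Mw (b + 1)) * q b t := by
    intro b hb t
    rw [hq b t, ← mul_assoc, mul_one_div, div_self (mul_ne_zero (hfac b) (hMw b hb)), one_mul]
  -- Step A : integrability of monomials against the full derivative
  have hA : ∀ b, b ≤ n → ∀ j, j ≤ n →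
      IntegrableOn (fun t : ℝ => t ^ j * iteratedDeriv b (fun s : ℝ => (-s) ^ b * ω s) t)
        (Set.Ioi 0) := by
    intro b hb j
    induction j using Nat.strong_induction_on with
    | _ j ih =>
      intro hj
      have hcj : ((-1 : ℝ) ^ (j - j) * j.factorial * Mw (j + 1)) /
          (j.factorial * (j - j).factorial * Mw (j + 1)) = 1 := by
        rw [Nat.sub_self]
        simp only [pow_zero, one_mul, Nat.factorial_zero, Nat.cast_one, mul_one]
        rw [div_self (mul_ne_zero (hfac j) (hMw j hj))]
      have hmono : ∀ t : ℝ, t ^ j = p j t - ∑ i ∈ Finset.range j,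
          ((-1 : ℝ) ^ (j - i) * j.factorial * Mw (j + 1)) /
            (i.factorial * (j - i).factorial * Mw (i + 1)) * t ^ i := by
        intro t
        rw [hp j t, Finset.sum_range_succ, hcj]
        ring
      have e : (fun t : ℝ => t ^ j * iteratedDeriv b (fun s : ℝ => (-s) ^ b * ω s) t)
          = fun t : ℝ => (b.factorial * Mw (b + 1)) * (p j t * q b t)
              - ∑ i ∈ Finset.range j,
                  ((-1 : ℝ) ^ (j - i) * j.factorial * Mw (j + 1)) /
                    (i.factorial * (j - i).factorial * Mw (i + 1))
                  * (t ^ i * iteratedDeriv b (fun s : ℝ => (-s) ^ b * ω s) t) := by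
        funext t
        rw [hmono t, sub_mul, Finset.sum_mul]
        congr 1
        · rw [hqb b hb t]; ring
        · exact Finset.sum_congr rfl fun i _ => by ring
      rw [e]
      exact ((hint j b hj hb).const_mul _).sub
        (integrable_finset_sum _ fun i hi =>
          (ih i (Finset.mem_range.mp hi) (le_trans (le_of_lt (Finset.mem_range.mp hi)) hj)).const_mul _)
  -- Step B : integrability of t^(i+c) * ω^(i)
  have hB : ∀ i, i ≤ n → ∀ c, c ≤ n →
      IntegrableOn (fun t : ℝ => t ^ (i + c) * iteratedDeriv i ω t) (Set.Ioi 0) := by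
    intro i
    induction i using Nat.strong_induction_on with
    | _ i ih =>
      intro hi c hc
      have e : (fun t : ℝ => t ^ (i + c) * iteratedDeriv i ω t)
          = fun t : ℝ => ((-1 : ℝ) ^ i)
              * (t ^ c * iteratedDeriv i (fun s : ℝ => (-s) ^ i * ω s) t)
              - ∑ i' ∈ Finset.range i, ((i.choose i' * i.descFactorial (i - i') : ℕ) : ℝ)
                  * (t ^ (i' + c) * iteratedDeriv i' ω t) := by
        funext t
        have h2 : ∀ S : ℝ, (-1 : ℝ) ^ i * (t ^ c * ((-1 : ℝ) ^ i * S)) = t ^ c * S := by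
          intro S
          have hsq : ((-1 : ℝ) ^ i) * ((-1 : ℝ) ^ i) = 1 := by rw [← mul_pow]; norm_num
          linear_combination (t ^ c * S) * hsq
        rw [leibniz ω hω i i t, h2, Finset.mul_sum, Finset.sum_range_succ]
        have hlast : t ^ c * (((i.choose i * i.descFactorial (i - i) : ℕ) : ℝ)
            * (t ^ (i - (i - i)) * iteratedDeriv i ω t))
            = t ^ (i + c) * iteratedDeriv i ω t := by
          simp only [Nat.sub_self, Nat.sub_zero, Nat.choose_self, Nat.descFactorial_zero,
            mul_one, Nat.cast_one, one_mul]
          rw [pow_add]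
          ring
        rw [hlast]
        have hrest : ∀ i' ∈ Finset.range i,
            t ^ c * (((i.choose i' * i.descFactorial (i - i') : ℕ) : ℝ)
              * (t ^ (i - (i - i')) * iteratedDeriv i' ω t))
            = ((i.choose i' * i.descFactorial (i - i') : ℕ) : ℝ)
              * (t ^ (i' + c) * iteratedDeriv i' ω t) := by
          intro i' hi'
          have h1 : i - (i - i') = i' := by
            have := Finset.mem_range.mp hi'
            omega
          rw [h1, pow_add]
          ring
        rw [Finset.sum_congr rfl hrest]
        ring
      rw [e]
      refine Integrable.sub ((hA i hi c hc).const_mul _)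
        (integrable_finset_sum _ fun i' hi' => ?_)
      exact (ih i' (Finset.mem_range.mp hi')
        (le_trans (le_of_lt (Finset.mem_range.mp hi')) hi) c hc).const_mul _
  -- expansion lemma
  have hexp : ∀ b m s : ℕ, m ≤ b → ∀ t : ℝ,
      t ^ s * iteratedDeriv m (fun u : ℝ => (-u) ^ b * ω u) t
        = ∑ i ∈ Finset.range (m + 1),
            ((-1 : ℝ) ^ b * ((m.choose i * b.descFactorial (m - i) : ℕ) : ℝ))
              * (t ^ (i + (s + (b - m))) * iteratedDeriv i ω t) := by
    intro b m s hmb t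
    rw [leibniz ω hω b m t, mul_left_comm, Finset.mul_sum, Finset.mul_sum]
    refine Finset.sum_congr rfl fun i hi => ?_
    have he : i + (s + (b - m)) = s + (b - (m - i)) := by
      have := Finset.mem_range.mp hi
      omega
    rw [he, pow_add]
    ring
  -- Step C : integrability of t^s * (g b)^(m)
  have hC : ∀ b, b ≤ n → ∀ m, m ≤ b → ∀ s, s + (b - m) ≤ n →
      IntegrableOn (fun t : ℝ => t ^ s * iteratedDeriv m (fun u : ℝ => (-u) ^ b * ω u) t)
        (Set.Ioi 0) := by
    intro b hb m hmb s hs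
    rw [show (fun t : ℝ => t ^ s * iteratedDeriv m (fun u : ℝ => (-u) ^ b * ω u) t)
        = fun t : ℝ => ∑ i ∈ Finset.range (m + 1),
            ((-1 : ℝ) ^ b * ((m.choose i * b.descFactorial (m - i) : ℕ) : ℝ))
              * (t ^ (i + (s + (b - m))) * iteratedDeriv i ω t) from funext (hexp b m s hmb)]
    refine integrable_finset_sum _ fun i hi => ?_
    have h1 : i ≤ n := le_trans (le_trans (Nat.lt_succ_iff.mp (Finset.mem_range.mp hi)) hmb) hb
    exact (hB i h1 (s + (b - m)) hs).const_mul _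
  -- Step D : boundary limit at 0+
  have hD0 : ∀ b, b ≤ n → ∀ m, m ≤ b → ∀ s, 1 ≤ s + (b - m) →
      Tendsto (fun t : ℝ => t ^ s * iteratedDeriv m (fun u : ℝ => (-u) ^ b * ω u) t)
        (nhdsWithin 0 (Set.Ioi 0)) (nhds 0) := by
    intro b hb m hmb s hs
    rw [show (fun t : ℝ => t ^ s * iteratedDeriv m (fun u : ℝ => (-u) ^ b * ω u) t)
        = fun t : ℝ => ∑ i ∈ Finset.range (m + 1),
            ((-1 : ℝ) ^ b * ((m.choose i * b.descFactorial (m - i) : ℕ) : ℝ))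
              * (t ^ (i + (s + (b - m))) * iteratedDeriv i ω t) from funext (hexp b m s hmb)]
    have hterm : ∀ i ∈ Finset.range (m + 1), Tendsto (fun t : ℝ =>
        ((-1 : ℝ) ^ b * ((m.choose i * b.descFactorial (m - i) : ℕ) : ℝ))
          * (t ^ (i + (s + (b - m))) * iteratedDeriv i ω t))
        (nhdsWithin 0 (Set.Ioi 0)) (nhds 0) := by
      intro i hi
      have hin : i ≤ n := le_trans (le_trans (Nat.lt_succ_iff.mp (Finset.mem_range.mp hi)) hmb) hb
      have h1 : Tendsto (fun t : ℝ => t ^ (s + (b - m))) (nhdsWithin 0 (Set.Ioi 0)) (nhds 0) := by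
        have h2 : Tendsto (fun t : ℝ => t ^ (s + (b - m))) (nhds 0) (nhds 0) := by
          have h3 := (continuous_pow (s + (b - m))).tendsto (0 : ℝ)
          rwa [zero_pow (by omega)] at h3
        exact tendsto_nhdsWithin_of_tendsto_nhds h2
      have h3 := h1.mul (hbd0 i i hin hin)
      rw [mul_zero] at h3
      have h4 : (fun t : ℝ => t ^ (s + (b - m)) * (t ^ i * iteratedDeriv i ω t))
          = fun t : ℝ => t ^ (i + (s + (b - m))) * iteratedDeriv i ω t := by
        funext t; rw [pow_add]; ring
      rw [h4] at h3
      have h5 := h3.const_mul ((-1 : ℝ) ^ b * ((m.choose i * b.descFactorial (m - i) : ℕ) : ℝ))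
      rwa [mul_zero] at h5
    have h6 := tendsto_finset_sum (Finset.range (m + 1)) hterm
    simpa using h6
  -- Step E : boundary limit at infinity
  have hDtop : ∀ b, b ≤ n → ∀ m, m < b → ∀ s, s + (b - m) ≤ n + 1 →
      Tendsto (fun t : ℝ => t ^ s * iteratedDeriv m (fun u : ℝ => (-u) ^ b * ω u) t)
        atTop (nhds 0) := by
    intro b hb m hmb s hs
    have e0 : ∀ X : ℝ → ℝ, (fun t : ℝ => t ^ 0 * X t) = X :=
      fun X => funext fun t => by rw [pow_zero, one_mul]
    have hcont : Continuous (iteratedDeriv m (fun u : ℝ => (-u) ^ b * ω u)) :=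
      (hgsm b).continuous_iteratedDeriv m (by exact_mod_cast (le_top : (m : ℕ∞) ≤ ⊤))
    rcases Nat.eq_zero_or_pos s with hs0 | hs1
    · subst hs0
      rw [e0]
      refine tendsto_zero_atTop_aux _
        (fun t => iteratedDeriv (m + 1) (fun u : ℝ => (-u) ^ b * ω u) t)
        (fun t => iteratedDeriv m (fun u : ℝ => (-u) ^ b * ω u) t * t⁻¹)
        (fun x _ => hder b m x) ?_ ?_ ?_
      · have h1 := (hC b hb (m + 1) (by omega) 0 (by omega)).mono_set
          (Set.Ioi_subset_Ioi zero_le_one)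
        rwa [e0] at h1
      · have h1 := (hC b hb m hmb.le 0 (by omega)).mono_set
          (Set.Ioi_subset_Ioi zero_le_one)
        rw [e0] at h1
        refine Integrable.mono' h1.abs ?_ ?_
        · exact (hcont.measurable.mul measurable_inv).aestronglyMeasurable
        · rw [ae_restrict_iff' measurableSet_Ioi]
          filter_upwards with x hx
          have hx1 : (1 : ℝ) < x := hx
          rw [Real.norm_eq_abs, abs_mul]
          have h2 : |x⁻¹| ≤ 1 := by
            rw [abs_of_pos (by positivity : (0:ℝ) < x⁻¹)]
            rw [inv_le_one_iff₀]
            right; linarith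
          nlinarith [abs_nonneg (iteratedDeriv m (fun u : ℝ => (-u) ^ b * ω u) x)]
      · intro x hx
        have hx0 : x ≠ 0 := by
          have : (1:ℝ) < x := hx
          linarith
        field_simp
    · refine tendsto_zero_atTop_aux _
        (fun x => (s : ℝ) * x ^ (s - 1) * iteratedDeriv m (fun u : ℝ => (-u) ^ b * ω u) x
          + x ^ s * iteratedDeriv (m + 1) (fun u : ℝ => (-u) ^ b * ω u) x)
        (fun t => t ^ (s - 1) * iteratedDeriv m (fun u : ℝ => (-u) ^ b * ω u) t)
        (fun x _ => (hasDerivAt_pow s x).mul (hder b m x)) ?_ ?_ ?_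
      · have hsum : IntegrableOn (fun x : ℝ =>
            (s : ℝ) * x ^ (s - 1) * iteratedDeriv m (fun u : ℝ => (-u) ^ b * ω u) x
              + x ^ s * iteratedDeriv (m + 1) (fun u : ℝ => (-u) ^ b * ω u) x) (Set.Ioi 0) := by
          refine Integrable.add ?_ ?_
          · have h1 := (hC b hb m hmb.le (s - 1) (by omega)).const_mul (s : ℝ)
            exact h1.congr (Eventually.of_forall fun x => by ring)
          · exact hC b hb (m + 1) (by omega) s (by omega)
        exact hsum.mono_set (Set.Ioi_subset_Ioi zero_le_one)
      · exact (hC b hb m hmb.le (s - 1) (by omega)).mono_set (Set.Ioi_subset_Ioi zero_le_one)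
      · intro x hx
        have hxp : x ^ s = x * x ^ (s - 1) := by
          rw [← pow_succ']
          congr 1
          omega
        rw [hxp]
        ring
  -- integration by parts step
  have hIBP : ∀ b, b ≤ n → ∀ m, m < b → ∀ s, s + (b - m) ≤ n →
      ∫ t in Set.Ioi (0:ℝ), t ^ (s + 1) * iteratedDeriv (m + 1) (fun u : ℝ => (-u) ^ b * ω u) t
        = -((s : ℝ) + 1) * ∫ t in Set.Ioi (0:ℝ),
            t ^ s * iteratedDeriv m (fun u : ℝ => (-u) ^ b * ω u) t := by
    intro b hb m hmb s hs
    have hint1 : IntegrableOn (fun t : ℝ =>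
        ((s : ℝ) + 1) * (t ^ s * iteratedDeriv m (fun u : ℝ => (-u) ^ b * ω u) t))
        (Set.Ioi 0) := (hC b hb m hmb.le s hs).const_mul _
    have hint2 : IntegrableOn (fun t : ℝ =>
        t ^ (s + 1) * iteratedDeriv (m + 1) (fun u : ℝ => (-u) ^ b * ω u) t)
        (Set.Ioi 0) := hC b hb (m + 1) (by omega) (s + 1) (by omega)
    have hftc := ftc_Ioi
      (fun t : ℝ => t ^ (s + 1) * iteratedDeriv m (fun u : ℝ => (-u) ^ b * ω u) t)
      (fun x : ℝ => ((s : ℝ) + 1) * (x ^ s * iteratedDeriv m (fun u : ℝ => (-u) ^ b * ω u) x)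
        + x ^ (s + 1) * iteratedDeriv (m + 1) (fun u : ℝ => (-u) ^ b * ω u) x) 0 0
      (fun x _ => by
        have h := (hasDerivAt_pow (s + 1) x).fun_mul (hder b m x)
        simp only [Nat.add_sub_cancel] at h
        refine h.congr_deriv ?_
        push_cast
        ring)
      (hint1.add hint2)
      (hD0 b hb m hmb.le (s + 1) (by omega))
      (hDtop b hb m hmb (s + 1) (by omega))
    rw [integral_add hint1 hint2, integral_const_mul] at hftc
    linarith
  -- key reduction by repeated integration by parts
  have hKey : ∀ b, b ≤ n → ∀ m, m ≤ b → ∀ s, s + (b - m) ≤ n →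
      ∫ t in Set.Ioi (0:ℝ), t ^ s * iteratedDeriv m (fun u : ℝ => (-u) ^ b * ω u) t
        = if m ≤ s then
            ((-1 : ℝ) ^ m * ((s.descFactorial m : ℕ) : ℝ))
              * ∫ t in Set.Ioi (0:ℝ), t ^ (s - m) * ((-t) ^ b * ω t)
          else 0 := by
    intro b hb m
    induction m with
    | zero =>
      intro _ s hs
      rw [if_pos (Nat.zero_le s)]
      simp [iteratedDeriv_zero]
    | succ m ih =>
      intro hm1 s hs
      rcases Nat.eq_zero_or_pos s with rfl | hspos
      · rw [if_neg (by omega)]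
        have hftc := ftc_Ioi (iteratedDeriv m (fun u : ℝ => (-u) ^ b * ω u))
          (iteratedDeriv (m + 1) (fun u : ℝ => (-u) ^ b * ω u)) 0 0
          (fun x _ => hder b m x) ?_ ?_ ?_
        · simpa using hftc
        · have h1 := hC b hb (m + 1) hm1 0 (by omega)
          simpa using h1
        · have h1 := hD0 b hb m (by omega) 0 (by omega)
          simpa using h1
        · have h1 := hDtop b hb m (by omega) 0 (by omega)
          simpa using h1
      · obtain ⟨s', rfl⟩ : ∃ s', s = s' + 1 := ⟨s - 1, by omega⟩
        rw [hIBP b hb m (by omega) s' (by omega), ih (by omega) s' (by omega)]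
        by_cases hms : m ≤ s'
        · rw [if_pos hms, if_pos (by omega)]
          have hd : ((s' + 1).descFactorial (m + 1) : ℕ) = (s' + 1) * s'.descFactorial m :=
            Nat.succ_descFactorial_succ s' m
          have he : s' + 1 - (m + 1) = s' - m := by omega
          rw [he, hd, pow_succ]
          push_cast
          ring
        · rw [if_neg hms, if_neg (by omega), mul_zero]
  -- value of the reduced integrals
  have hmain : ∀ j, j ≤ n → ∀ b, b ≤ n →
      ∫ t in Set.Ioi (0:ℝ), t ^ j * iteratedDeriv b (fun u : ℝ => (-u) ^ b * ω u) t
        = if b ≤ j then ((j.descFactorial b : ℕ) : ℝ) * Mw (j + 1) else 0 := by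
    intro j hj b hb
    rw [hKey b hb b le_rfl j (by omega)]
    by_cases hbj : b ≤ j
    · rw [if_pos hbj, if_pos hbj]
      have hgint : (∫ t in Set.Ioi (0:ℝ), t ^ (j - b) * ((-t) ^ b * ω t))
          = (-1 : ℝ) ^ b * Mw (j + 1) := by
        have e : (fun t : ℝ => t ^ (j - b) * ((-t) ^ b * ω t))
            = fun t : ℝ => (-1 : ℝ) ^ b * (t ^ j * ω t) := by
          funext t
          rw [neg_pow]
          have hjb : j - b + b = j := by omega
          rw [show t ^ (j - b) * ((-1 : ℝ) ^ b * t ^ b * ω t)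
              = (-1 : ℝ) ^ b * (t ^ (j - b) * t ^ b * ω t) from by ring, ← pow_add, hjb]
        rw [e, integral_const_mul, hMwval j hj]
      rw [hgint]
      have hsq : (-1 : ℝ) ^ b * (-1 : ℝ) ^ b = 1 := by rw [← mul_pow]; norm_num
      linear_combination (((j.descFactorial b : ℕ) : ℝ) * Mw (j + 1)) * hsq
    · rw [if_neg hbj, if_neg hbj]
  -- integrability and value of monomials against q
  have hqintg : ∀ b, b ≤ n → ∀ j, j ≤ n →
      IntegrableOn (fun t : ℝ => t ^ j * q b t) (Set.Ioi 0) := by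
    intro b hb j hj
    have e : (fun t : ℝ => t ^ j * q b t)
        = fun t : ℝ => (1 / (b.factorial * Mw (b + 1)))
            * (t ^ j * iteratedDeriv b (fun u : ℝ => (-u) ^ b * ω u) t) := by
      funext t
      rw [hq b t]
      ring
    rw [e]
    exact (hA b hb j hj).const_mul _
  have hqint : ∀ b, b ≤ n → ∀ j, j ≤ n →
      (∫ t in Set.Ioi (0:ℝ), t ^ j * q b t)
        = (1 / (b.factorial * Mw (b + 1)))
            * (if b ≤ j then ((j.descFactorial b : ℕ) : ℝ) * Mw (j + 1) else 0) := by
    intro b hb j hj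
    have e : (fun t : ℝ => t ^ j * q b t)
        = fun t : ℝ => (1 / (b.factorial * Mw (b + 1)))
            * (t ^ j * iteratedDeriv b (fun u : ℝ => (-u) ^ b * ω u) t) := by
      funext t
      rw [hq b t]
      ring
    rw [e, integral_const_mul, hmain j hj b hb]
  -- final assembly
  intro a b ha hb
  have hsplit : (fun t : ℝ => p a t * q b t)
      = fun t : ℝ => ∑ j ∈ Finset.range (a + 1),
          ((-1 : ℝ) ^ (a - j) * a.factorial * Mw (a + 1) /
            (j.factorial * (a - j).factorial * Mw (j + 1))) * (t ^ j * q b t) := by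
    funext t
    rw [hp a t, Finset.sum_mul]
    exact Finset.sum_congr rfl fun j _ => by ring
  rw [hsplit, integral_finset_sum _ (fun j hj => ((hqintg b hb j
    (le_trans (Nat.lt_succ_iff.mp (Finset.mem_range.mp hj)) ha)).const_mul _))]
  have hterm : ∀ j ∈ Finset.range (a + 1),
      (∫ t in Set.Ioi (0:ℝ), ((-1 : ℝ) ^ (a - j) * a.factorial * Mw (a + 1) /
          (j.factorial * (a - j).factorial * Mw (j + 1))) * (t ^ j * q b t))
      = ((-1 : ℝ) ^ (a - j) * a.factorial * Mw (a + 1) /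
          (j.factorial * (a - j).factorial * Mw (j + 1))) *
        ((1 / (b.factorial * Mw (b + 1)))
          * (if b ≤ j then ((j.descFactorial b : ℕ) : ℝ) * Mw (j + 1) else 0)) := by
    intro j hj
    rw [integral_const_mul, hqint b hb j (le_trans (Nat.lt_succ_iff.mp (Finset.mem_range.mp hj)) ha)]
  rw [Finset.sum_congr rfl hterm]
  rcases lt_trichotomy a b with hab | rfl | hab
  · rw [if_neg (by omega)]
    refine Finset.sum_eq_zero fun j hj => ?_
    rw [if_neg (by have := Finset.mem_range.mp hj; omega), mul_zero, mul_zero]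
  · rw [if_pos rfl, Finset.sum_range_succ]
    have hzero : (∑ j ∈ Finset.range a,
        ((-1 : ℝ) ^ (a - j) * a.factorial * Mw (a + 1) /
          (j.factorial * (a - j).factorial * Mw (j + 1))) *
        ((1 / (a.factorial * Mw (a + 1)))
          * (if a ≤ j then ((j.descFactorial a : ℕ) : ℝ) * Mw (j + 1) else 0))) = 0 :=
      Finset.sum_eq_zero fun j hj => by
        rw [if_neg (by have := Finset.mem_range.mp hj; omega), mul_zero, mul_zero]
    rw [hzero, zero_add, if_pos le_rfl, Nat.descFactorial_self, Nat.sub_self]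
    simp only [pow_zero, one_mul, Nat.factorial_zero, Nat.cast_one, mul_one]
    field_simp
    exact div_self (hMw a ha)
  · rw [if_neg (by omega)]
    set d := a - b with hd
    have hd1 : 1 ≤ d := by omega
    rw [Finset.range_eq_Ico, ← Finset.sum_Ico_consecutive _ (Nat.zero_le b) (by omega : b ≤ a + 1)]
    have hzero : (∑ j ∈ Finset.Ico 0 b,
        ((-1 : ℝ) ^ (a - j) * a.factorial * Mw (a + 1) /
          (j.factorial * (a - j).factorial * Mw (j + 1))) *
        ((1 / (b.factorial * Mw (b + 1)))
          * (if b ≤ j then ((j.descFactorial b : ℕ) : ℝ) * Mw (j + 1) else 0))) = 0 :=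
      Finset.sum_eq_zero fun j hj => by
        rw [if_neg (by have := (Finset.mem_Ico.mp hj).2; omega), mul_zero, mul_zero]
    rw [hzero, zero_add, Finset.sum_Ico_eq_sum_range]
    have hrange : a + 1 - b = d + 1 := by omega
    rw [hrange]
    have hterm2 : ∀ k ∈ Finset.range (d + 1),
        ((-1 : ℝ) ^ (a - (b + k)) * a.factorial * Mw (a + 1) /
          ((b + k).factorial * (a - (b + k)).factorial * Mw ((b + k) + 1))) *
        ((1 / (b.factorial * Mw (b + 1)))
          * (if b ≤ b + k then (((b + k).descFactorial b : ℕ) : ℝ) * Mw ((b + k) + 1) else 0))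
        = ((-1 : ℝ) ^ d * a.factorial * Mw (a + 1) / (d.factorial * b.factorial * Mw (b + 1)))
            * ((-1 : ℝ) ^ k * ((d.choose k : ℕ) : ℝ)) := by
      intro k hk
      have hkd : k ≤ d := Nat.lt_succ_iff.mp (Finset.mem_range.mp hk)
      have habk : a - (b + k) = d - k := by omega
      rw [if_pos (Nat.le_add_right b k), habk]
      have hsgn : (-1 : ℝ) ^ (d - k) = (-1) ^ d * (-1) ^ k := by
        have h1 : (-1 : ℝ) ^ (d - k) * (-1) ^ k = (-1) ^ d := by
          rw [← pow_add]
          congr 1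
          omega
        have h2 : (-1 : ℝ) ^ k * (-1) ^ k = 1 := by rw [← mul_pow]; norm_num
        calc (-1 : ℝ) ^ (d - k) = (-1 : ℝ) ^ (d - k) * ((-1) ^ k * (-1) ^ k) := by
              rw [h2, mul_one]
          _ = ((-1 : ℝ) ^ (d - k) * (-1) ^ k) * (-1) ^ k := by ring
          _ = (-1 : ℝ) ^ d * (-1) ^ k := by rw [h1]
      rw [hsgn]
      have hnat1 : (b + k).descFactorial b * k.factorial = (b + k).factorial := by
        rw [Nat.descFactorial_eq_factorial_mul_choose]
        calc b.factorial * (b + k).choose b * k.factorial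
            = (k + b).choose b * k.factorial * b.factorial := by rw [add_comm b k]; ring
          _ = (k + b).factorial := Nat.add_choose_mul_factorial_mul_factorial k b
          _ = (b + k).factorial := by rw [add_comm k b]
      have hnat2 : d.choose k * (k.factorial * (d - k).factorial) = d.factorial := by
        have h := Nat.choose_mul_factorial_mul_factorial hkd
        calc d.choose k * (k.factorial * (d - k).factorial)
            = d.choose k * k.factorial * (d - k).factorial := by ring
          _ = d.factorial := h
      have c1 : (((b + k).factorial : ℕ) : ℝ)
          = (((b + k).descFactorial b : ℕ) : ℝ) * ((k.factorial : ℕ) : ℝ) := by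
        exact_mod_cast congrArg (fun x : ℕ => (x : ℝ)) hnat1.symm
      have c2 : ((d.factorial : ℕ) : ℝ)
          = ((d.choose k : ℕ) : ℝ) * (((k.factorial : ℕ) : ℝ) * (((d - k).factorial : ℕ) : ℝ)) := by
        exact_mod_cast congrArg (fun x : ℕ => (x : ℝ)) hnat2.symm
      rw [c1, c2]
      have hne1 : Mw (b + k + 1) ≠ 0 := hMw (b + k) (by omega)
      have hne2 : Mw (b + 1) ≠ 0 := hMw b hb
      have hne3 : (((b + k).descFactorial b : ℕ) : ℝ) ≠ 0 := by
        have h5 := hfac (b + k)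
        rw [c1] at h5
        exact left_ne_zero_of_mul h5
      have hne4 : ((d.choose k : ℕ) : ℝ) ≠ 0 :=
        Nat.cast_ne_zero.mpr (Nat.choose_pos hkd).ne'
      field_simp
    rw [Finset.sum_congr rfl hterm2, ← Finset.mul_sum]
    have hd0 : d ≠ 0 := by omega
    have halt : (∑ k ∈ Finset.range (d + 1), (-1 : ℝ) ^ k * ((d.choose k : ℕ) : ℝ)) = 0 := by
      have h := Int.alternating_sum_range_choose_of_ne hd0
      have h2 := congrArg (fun z : ℤ => (z : ℝ)) h
      push_cast at h2
      exact_mod_cast h2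
    rw [halt, mul_zero]
end

section
/- For ω(x) = x^ν e^{−x} with integer ν ≥ 0 and any integer n ≥ 1, the function K(0,y) := (1/((n−1)! ν!)) (1/y) d^{n−1}/dy^{n−1}[y^{n} ω(y)] satisfies ∫_0^∞ K(0,y) dy = 1 and ∫_0^∞ y^m K(0,y) dy = 0 for all 1 ≤ m ≤ n−1. -/
/-!
By Leibniz, `∂^k[y^p e^{-y}] = ∑_j (-1)^(k-j) C(k,j) p^(j) y^(p-j) e^{-y}` (falling factorials
`p^(j)`), and Euler's integral turns `∫₀^∞ y^(q-1) ∂^k[y^p e^{-y}] dy` into the `k`-th forward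
difference at `0` of `j ↦ p^(j) (s - j)!`, where `s = p - 1 + q`. One forward difference of this
sequence multiplies it by `p - s` and lowers `s` by one, so the moment equals
`(1 - q)(2 - q)⋯(k - q) · (s - k)!`: this is `k! ν!` for `q = 0, p = k + 1 + ν`, and vanishes for
`1 ≤ q ≤ k`. It is the discrete form of integrating by parts `k` times.
-/

open MeasureTheory Finset fwdDiff
open scoped Nat

lemma integrableOn_pow_mul_exp_neg_Ioi (a : ℕ) :
    IntegrableOn (fun y : ℝ => y ^ a * Real.exp (-y)) (Set.Ioi 0) :=
  (Real.GammaIntegral_convergent (s := a + 1) (by positivity)).congr_fun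
    (fun y _ => by simp [mul_comm]) measurableSet_Ioi

lemma integral_pow_mul_exp_neg_Ioi (a : ℕ) :
    ∫ y in Set.Ioi (0 : ℝ), y ^ a * Real.exp (-y) = a ! := by
  rw [← Real.Gamma_nat_eq_factorial, Real.Gamma_eq_integral (by positivity)]
  exact setIntegral_congr_fun measurableSet_Ioi fun y _ => by simp [mul_comm]

lemma iteratedDeriv_pow_mul_exp_neg (p k : ℕ) (y : ℝ) :
    iteratedDeriv k (fun u => u ^ p * Real.exp (-u)) y =
      ∑ i ∈ range (k + 1),
        (-1) ^ (k - i) * k.choose i * p.descFactorial i * y ^ (p - i) * Real.exp (-y) := by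
  have hexp (j : ℕ) : iteratedDeriv j (fun u => Real.exp (-u)) y = (-1) ^ j * Real.exp (-y) := by
    simpa using congrFun (iteratedDeriv_exp_const_mul j (-1)) y
  rw [show (fun u : ℝ => u ^ p * Real.exp (-u)) = (· ^ p) * fun u => Real.exp (-u) from rfl,
    iteratedDeriv_mul (by fun_prop) (by fun_prop)]
  refine sum_congr rfl fun i _ => ?_
  rw [iteratedDeriv_pow, hexp]
  ring

section ForwardDifference

variable (R : Type*) [CommRing R]

lemma Nat.cast_descFactorial_succ (p i : ℕ) :
    (p.descFactorial (i + 1) : R) = ((p : R) - i) * p.descFactorial i := by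
  rw [← descPochhammer_eval_eq_descFactorial, ← descPochhammer_eval_eq_descFactorial,
    descPochhammer_succ_eval, mul_comm]

def descFactorialMulFactorial (p s j : ℕ) : R :=
  p.descFactorial j * (s - j)!

lemma fwdDiff_descFactorialMulFactorial (p s i : ℕ) (hi : i < s) :
    Δ_[1] (descFactorialMulFactorial R p s) i =
      ((p : R) - s) * descFactorialMulFactorial R p (s - 1) i := by
  obtain ⟨t, rfl⟩ : ∃ t, s = i + 1 + t := ⟨s - i - 1, by omega⟩
  simp only [fwdDiff, descFactorialMulFactorial]
  rw [Nat.cast_descFactorial_succ, show i + 1 + t - (i + 1) = t by omega,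
    show i + 1 + t - i = t + 1 by omega, show i + 1 + t - 1 - i = t by omega, Nat.factorial_succ]
  push_cast
  ring

lemma fwdDiff_iter_descFactorialMulFactorial (p k s i : ℕ) (hi : i + k ≤ s) :
    (Δ_[1])^[k] (descFactorialMulFactorial R p s) i =
      (ascPochhammer R k).eval ((p : R) - s) * descFactorialMulFactorial R p (s - k) i := by
  induction k generalizing s i with
  | zero => simp
  | succ k ih =>
    rw [Function.iterate_succ_apply']
    change _ - _ = _
    rw [ih s (i + 1) (by omega), ih s i (by omega), ← mul_sub]
    change _ * Δ_[1] _ i = _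
    rw [fwdDiff_descFactorialMulFactorial R p (s - k) i (by omega), ascPochhammer_succ_eval,
      Nat.cast_sub (show k ≤ s by omega), show s - k - 1 = s - (k + 1) by omega]
    ring

lemma sum_alternating_choose_descFactorial_mul_factorial {k s : ℕ} (p : ℕ) (hks : k ≤ s) :
    ∑ i ∈ range (k + 1), (-1 : R) ^ (k - i) * k.choose i * p.descFactorial i * (s - i)! =
      (ascPochhammer R k).eval ((p : R) - s) * (s - k)! := by
  have h := fwdDiff_iter_descFactorialMulFactorial R p k s 0 (by omega)
  rw [fwdDiff_iter_eq_sum_shift] at h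
  simpa [descFactorialMulFactorial, zsmul_eq_mul, mul_assoc] using h

end ForwardDifference

lemma integral_pow_mul_inv_mul_iteratedDeriv_pow_mul_exp_neg {k p : ℕ} (hkp : k < p) (q : ℕ) :
    ∫ y in Set.Ioi (0 : ℝ),
        y ^ q * (y⁻¹ * iteratedDeriv k (fun u => u ^ p * Real.exp (-u)) y) =
      (ascPochhammer ℝ k).eval (1 - q : ℝ) * (p - 1 + q - k)! := by
  have hexpand : ∀ y ∈ Set.Ioi (0 : ℝ),
      y ^ q * (y⁻¹ * iteratedDeriv k (fun u => u ^ p * Real.exp (-u)) y) =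
        ∑ i ∈ range (k + 1), (-1) ^ (k - i) * k.choose i * p.descFactorial i *
          (y ^ (p - 1 + q - i) * Real.exp (-y)) := by
    intro y hy
    rw [iteratedDeriv_pow_mul_exp_neg, mul_sum, mul_sum]
    refine sum_congr rfl fun i hi => ?_
    have hik : i ≤ k := Nat.lt_succ_iff.mp (mem_range.mp hi)
    rw [show p - i = (p - 1 - i) + 1 by omega, show p - 1 + q - i = q + (p - 1 - i) by omega,
      pow_succ, pow_add]
    field_simp [(Set.mem_Ioi.mp hy).ne']
  rw [setIntegral_congr_fun measurableSet_Ioi hexpand, integral_finsetSum _ fun i _ =>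
    (integrableOn_pow_mul_exp_neg_Ioi _).const_mul _]
  simp only [integral_const_mul, integral_pow_mul_exp_neg_Ioi]
  rw [sum_alternating_choose_descFactorial_mul_factorial ℝ p (by omega)]
  congr 2
  push_cast [Nat.cast_sub (show 1 ≤ p by omega)]
  ring

/-- For the Laguerre weight `ω(y) = y^ν e^{−y}` and `n ≥ 1`, the kernel
`K(0,y) = (1/((n−1)! ν!)) y⁻¹ ∂_y^{n−1}[y^n ω(y)]` integrates to `1` on
`(0,∞)` and is orthogonal to all monomials `y^m`, `1 ≤ m ≤ n−1`. -/
theorem laguerre_kernel_moments (n ν : ℕ) (hn : 1 ≤ n) :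
    (∫ y in Set.Ioi (0 : ℝ),
        (1 / ((n - 1).factorial * ν.factorial : ℝ)) * y⁻¹ *
          iteratedDeriv (n - 1) (fun u => u ^ n * (u ^ ν * Real.exp (-u))) y) = 1 ∧
      ∀ m : ℕ, 1 ≤ m → m ≤ n - 1 →
        (∫ y in Set.Ioi (0 : ℝ),
            y ^ m * ((1 / ((n - 1).factorial * ν.factorial : ℝ)) * y⁻¹ *
              iteratedDeriv (n - 1) (fun u => u ^ n * (u ^ ν * Real.exp (-u))) y)) = 0 := by
  obtain ⟨k, rfl⟩ : ∃ k, n = k + 1 := ⟨n - 1, by omega⟩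
  have hω : (fun u : ℝ => u ^ (k + 1) * (u ^ ν * Real.exp (-u))) =
      fun u => u ^ (k + 1 + ν) * Real.exp (-u) := by
    funext u
    ring
  have hmoment := integral_pow_mul_inv_mul_iteratedDeriv_pow_mul_exp_neg (p := k + 1 + ν)
    (show k < k + 1 + ν by omega)
  simp only [Nat.add_sub_cancel, hω]
  constructor
  · have hmass := hmoment 0
    simp only [pow_zero, one_mul, Nat.cast_zero, sub_zero, ascPochhammer_eval_one,
      show k + 1 + ν - 1 + 0 - k = ν by omega] at hmass
    simp_rw [mul_assoc (1 / _ : ℝ)]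
    rw [integral_const_mul, hmass]
    field_simp
  · intro m hm hmk
    have hvanish := hmoment m
    rw [show (1 : ℝ) - m = -((m - 1 : ℕ) : ℝ) by push_cast [Nat.cast_sub hm]; ring,
      ascPochhammer_eval_neg_coe_nat_of_lt (by omega), zero_mul] at hvanish
    calc _ = ∫ y in Set.Ioi (0 : ℝ), 1 / (k ! * ν ! : ℝ) *
            (y ^ m * (y⁻¹ * iteratedDeriv k (fun u => u ^ (k + 1 + ν) * Real.exp (-u)) y)) := by
          congr 1 with y
          ring
      _ = 0 := by rw [integral_const_mul, hvanish, mul_zero]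
end

section
/- For ω(y) = y^ν e^{−y} (ν ≥ 0 integer), n ≥ 2, σ, δ > 0, the ZF density formula ρ(γ) = (n−1)(σ/δ) ∫_0^1 K(0, σγx/δ)(1−x)^{n−2} x dx with K(0,y) = (1/((n−1)! ν!)) y^{−1} ∂_y^{n−1}[y^n ω(y)] simplifies to ρ(γ) = (σ/(ν! δ)) (σγ/δ)^ν e^{−σγ/δ}, i.e., the n-dependence cancels completely. -/
/-!
Put `a = σγ/δ` and `g(u) = uⁿ · u^ν e^{-u}`. The factor `x` cancels `(a x)⁻¹` up to `a⁻¹`, and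
`a^{n-1}/(n-2)! · ∫₀¹ (1-x)^{n-2} g^{(n-1)}(a x) dx` is the integral remainder of the Taylor
expansion of `g` at `0` to order `n-2`. That Taylor polynomial vanishes because `g` has a zero of
order `n` at `0`, so the remainder is `g(a)`, and `g(a) / aⁿ = a^ν e^{-a}`.
-/

open MeasureTheory
open scoped Nat

section Taylor

variable {F : Type*} [NormedAddCommGroup F] [NormedSpace ℝ F] [CompleteSpace F]

theorem map_add_eq_sum_add_integral_iteratedDeriv {f : ℝ → F} {x y : ℝ} {n : ℕ}
    (hf : ∀ t ∈ Set.Icc (0 : ℝ) 1, ContDiffAt ℝ (n + 1) f (x + t * y)) :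
    f (x + y) = ∑ k ∈ Finset.range (n + 1), (k ! : ℝ)⁻¹ • y ^ k • iteratedDeriv k f x +
      (n ! : ℝ)⁻¹ •
        ∫ t in 0..1, (1 - t) ^ n • y ^ (n + 1) • iteratedDeriv (n + 1) f (x + t * y) := by
  simpa [iteratedFDeriv_apply_eq_iteratedDeriv_mul_prod] using
    map_add_eq_sum_add_integral_iteratedFDeriv (x := x) (y := y) hf

theorem map_add_eq_integral_iteratedDeriv_of_iteratedDeriv_eq_zero {f : ℝ → F} {x y : ℝ} {n : ℕ}
    (hf : ∀ t ∈ Set.Icc (0 : ℝ) 1, ContDiffAt ℝ (n + 1) f (x + t * y))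
    (hf₀ : ∀ k ≤ n, iteratedDeriv k f x = 0) :
    f (x + y) = (n ! : ℝ)⁻¹ •
      ∫ t in 0..1, (1 - t) ^ n • y ^ (n + 1) • iteratedDeriv (n + 1) f (x + t * y) := by
  rw [map_add_eq_sum_add_integral_iteratedDeriv hf, Finset.sum_eq_zero, zero_add]
  intro k hk
  rw [hf₀ k (Finset.mem_range_succ_iff.mp hk), smul_zero, smul_zero]

end Taylor

theorem iteratedDeriv_sub_pow_mul_eq_zero {𝕜 : Type*} [NontriviallyNormedField 𝕜] [CharZero 𝕜]
    [CompleteSpace 𝕜] {R : 𝕜 → 𝕜} (hR : ∀ z, AnalyticAt 𝕜 R z) (z₀ : 𝕜) {k m : ℕ}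
    (hkm : k < m) :
    iteratedDeriv k (fun z => (z - z₀) ^ m * R z) z₀ = 0 := by
  obtain ⟨t, rfl⟩ := Nat.exists_eq_add_of_lt hkm
  obtain ⟨R₂, -, hR₂⟩ := iteratedDeriv_mul_pow_sub_of_analytic (k := k) (t := t + 1) (z₀ := z₀)
    hR (R := fun z => (z - z₀) ^ (k + t + 1) * R z) (fun z => by rw [add_assoc])
  simp [hR₂]

/-- For the Laguerre weight `ω(u) = u^ν e^{−u}`, `n ≥ 2`, `σ, δ > 0`, the ZF
density `ρ(γ) = (n−1)(σ/δ) ∫_0^1 K(0,σγx/δ)(1−x)^{n−2} x dx`, with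
`K(0,y) = (1/((n−1)! ν!)) y⁻¹ ∂_y^{n−1}[y^n ω(y)]`, equals the Gamma density
`(σ/(ν! δ))(σγ/δ)^ν e^{−σγ/δ}`: all `n`-dependence cancels. -/
theorem zf_density_laguerre_simplifies (n ν : ℕ) (hn : 2 ≤ n)
    (σ δ : ℝ) (hσ : 0 < σ) (hδ : 0 < δ) (γ : ℝ) (hγ : 0 < γ) :
    ((n : ℝ) - 1) * (σ / δ) *
        ∫ x in Set.Ioc (0 : ℝ) 1,
          ((1 / ((n - 1).factorial * ν.factorial : ℝ)) * (σ * γ * x / δ)⁻¹ *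
              iteratedDeriv (n - 1) (fun u => u ^ n * (u ^ ν * Real.exp (-u)))
                (σ * γ * x / δ)) *
            (1 - x) ^ (n - 2) * x =
      σ / (ν.factorial * δ) * (σ * γ / δ) ^ ν * Real.exp (-(σ * γ / δ)) := by
  obtain ⟨k, rfl⟩ := Nat.exists_eq_add_of_le' hn
  set a := σ * γ / δ
  set g : ℝ → ℝ := fun u => u ^ (k + 2) * (u ^ ν * Real.exp (-u))
  have ha : a ≠ 0 := by positivity
  have hR : ∀ z, AnalyticAt ℝ (fun u : ℝ => u ^ ν * Real.exp (-u)) z := fun z => by fun_prop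
  have taylor : g a = (k ! : ℝ)⁻¹ *
      ∫ t in (0 : ℝ)..1, (1 - t) ^ k * (a ^ (k + 1) * iteratedDeriv (k + 1) g (t * a)) := by
    simpa only [zero_add, smul_eq_mul] using
      map_add_eq_integral_iteratedDeriv_of_iteratedDeriv_eq_zero (f := g) (x := 0) (y := a)
        (n := k) (fun t _ => by fun_prop) fun j hj => by
          simpa using iteratedDeriv_sub_pow_mul_eq_zero hR 0 (m := k + 2) (by omega : j < k + 2)
  have hintegrand : ∀ x ∈ Set.Ioc (0 : ℝ) 1,
      (1 / ((k + 2 - 1) ! * ν ! : ℝ)) * (σ * γ * x / δ)⁻¹ * iteratedDeriv (k + 2 - 1) g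
          (σ * γ * x / δ) * (1 - x) ^ (k + 2 - 2) * x =
        ((k + 1) ! * ν ! * a ^ (k + 2) : ℝ)⁻¹ *
          ((1 - x) ^ k * (a ^ (k + 1) * iteratedDeriv (k + 1) g (x * a))) := by
    rintro x ⟨hx, -⟩
    rw [show σ * γ * x / δ = x * a by ring, Nat.add_sub_cancel, show k + 2 - 1 = k + 1 by omega]
    field_simp
    ring
  have hremainder :
      ∫ t in (0 : ℝ)..1, (1 - t) ^ k * (a ^ (k + 1) * iteratedDeriv (k + 1) g (t * a)) =
        k ! * g a := by
    rw [taylor, mul_inv_cancel_left₀ (by positivity)]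
  rw [setIntegral_congr_fun measurableSet_Ioc hintegrand, integral_const_mul,
    ← intervalIntegral.integral_of_le zero_le_one, hremainder]
  push_cast [Nat.factorial_succ, g]
  field_simp
  ring
end
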